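/- arXiv:1505.00368 — 5 statements merged into one kernel-verified Lean document; each statement's English description precedes it below -/
import Mathlib

section
/- If U and V are ultrafilters on ω and there exists a cofinal map from (U, ⊇) to (V, ⊇), then there exists a monotone cofinal map from U to V (where monotone means X ⊇ Y implies f(X) ⊇ f(Y)). -/
/-- `C` is a cofinal subset (filter base) of the ultrafilter `U`, ordered by `⊇`. -/
def IsCofinalSub (U : Ultrafilter ℕ) (C : Set (Set ℕ)) : Prop :=
  (∀ X ∈ C, X ∈ U) ∧ ∀ X ∈ U, ∃ Y ∈ C, Y ⊆ X

/-- `f` is a cofinal map from `U` to `V`: it carries every cofinal subset (filter base)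
of `U` to a cofinal subset (filter base) of `V`. -/
def IsCofinalMap (U V : Ultrafilter ℕ) (f : Set ℕ → Set ℕ) : Prop :=
  ∀ C : Set (Set ℕ), IsCofinalSub U C → IsCofinalSub V (f '' C)

/-- `f` is monotone on `U`: `X ⊇ Y` implies `f X ⊇ f Y` for members of `U`. -/
def MonotoneOnU (U : Ultrafilter ℕ) (f : Set ℕ → Set ℕ) : Prop :=
  ∀ X Y : Set ℕ, X ∈ U → Y ∈ U → Y ⊆ X → f Y ⊆ f X

/-!
A cofinal map `f : U → V` is convergent: every `W ∈ V` contains `f Z` for all `Z ∈ U` below some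
`X ∈ U`, for otherwise choosing, for each `X ∈ U`, a bad `Z ⊆ X` gives a cofinal subset of `U`
whose image misses `W`. Conversely, a convergent map sending `U` into `V` is cofinal. Replacing
`f X` by the union of the `f Z` over `Z ∈ U` with `Z ⊆ X` makes `f` monotone while keeping both
properties.
-/

open Set

variable {U V : Ultrafilter ℕ} {f : Set ℕ → Set ℕ}

theorem isCofinalSub_setOf_mem (U : Ultrafilter ℕ) : IsCofinalSub U {X | X ∈ U} :=
  ⟨fun _ hX => hX, fun X hX => ⟨X, hX, subset_rfl⟩⟩

namespace IsCofinalMap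

theorem mem_of_mem (hf : IsCofinalMap U V f) {X : Set ℕ} (hX : X ∈ U) : f X ∈ V :=
  (hf _ (isCofinalSub_setOf_mem U)).1 (f X) ⟨X, hX, rfl⟩

theorem exists_forall_subset (hf : IsCofinalMap U V f) {W : Set ℕ} (hW : W ∈ V) :
    ∃ X ∈ U, ∀ Z ∈ U, Z ⊆ X → f Z ⊆ W := by
  by_contra! hbad
  choose Z hZU hZX hZW using hbad
  have hC : IsCofinalSub U (range fun X : {X // X ∈ U} => Z X X.2) :=
    ⟨by rintro _ ⟨X, rfl⟩; exact hZU X X.2, fun X hX => ⟨Z X hX, ⟨⟨X, hX⟩, rfl⟩, hZX X hX⟩⟩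
  obtain ⟨_, ⟨_, ⟨X, rfl⟩, rfl⟩, hsub⟩ := (hf _ hC).2 W hW
  exact hZW X X.2 hsub

end IsCofinalMap

theorem isCofinalMap_of_forall_mem (hmem : ∀ X ∈ U, f X ∈ V)
    (hconv : ∀ W ∈ V, ∃ X ∈ U, ∀ Z ∈ U, Z ⊆ X → f Z ⊆ W) : IsCofinalMap U V f := by
  refine fun C hC => ⟨?_, fun W hW => ?_⟩
  · rintro _ ⟨X, hXC, rfl⟩
    exact hmem X (hC.1 X hXC)
  · obtain ⟨X, hXU, hX⟩ := hconv W hW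
    obtain ⟨Y, hYC, hYX⟩ := hC.2 X hXU
    exact ⟨f Y, mem_image_of_mem f hYC, hX Y (hC.1 Y hYC) hYX⟩

def monotoneHull (U : Ultrafilter ℕ) (f : Set ℕ → Set ℕ) (X : Set ℕ) : Set ℕ :=
  ⋃₀ (f '' {Z | Z ∈ U ∧ Z ⊆ X})

theorem monotone_monotoneHull : Monotone (monotoneHull U f) :=
  fun _ _ hXY => sUnion_mono (image_mono fun _ hZ => ⟨hZ.1, hZ.2.trans hXY⟩)

theorem subset_monotoneHull {X : Set ℕ} (hX : X ∈ U) : f X ⊆ monotoneHull U f X :=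
  subset_sUnion_of_mem ⟨X, ⟨hX, subset_rfl⟩, rfl⟩

theorem IsCofinalMap.monotoneHull (hf : IsCofinalMap U V f) :
    IsCofinalMap U V (monotoneHull U f) := by
  refine isCofinalMap_of_forall_mem
    (fun X hX => V.toFilter.mem_of_superset (hf.mem_of_mem hX) (subset_monotoneHull hX))
    fun W hW => ?_
  obtain ⟨X, hXU, hX⟩ := hf.exists_forall_subset hW
  refine ⟨X, hXU, fun Z _ hZX => sUnion_subset ?_⟩
  rintro _ ⟨Z', ⟨hZ'U, hZ'Z⟩, rfl⟩
  exact hX Z' hZ'U (hZ'Z.trans hZX)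

/-- If there is a cofinal map from `U` to `V`, then there is a monotone cofinal map. -/
theorem exists_monotone_cofinal_map (U V : Ultrafilter ℕ)
    (h : ∃ f : Set ℕ → Set ℕ, IsCofinalMap U V f) :
    ∃ f : Set ℕ → Set ℕ, IsCofinalMap U V f ∧ MonotoneOnU U f := by
  obtain ⟨f, hf⟩ := h
  exact ⟨monotoneHull U f, hf.monotoneHull, fun _ _ _ _ hYX => monotone_monotoneHull hYX⟩
end

section
/- Suppose U and V are nonprincipal ultrafilters on ω, f : U → V is a monotone cofinal map, and there is a cofinal subset C ⊆ U such that f↾C is generated by a basic map. Then there is a monotone map f̃ : 2^ω → 2^ω such that: (1) f̃ is generated by a basic map; (2) f̃↾C = f↾C; and (3) f̃↾U is a cofinal map from U to V. -/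
/-- The characteristic function of `X ∩ k` with domain `k`. -/
noncomputable def restr (X : Set ℕ) (k : ℕ) : List Bool :=
  (List.range k).map (fun i => @decide (i ∈ X) (Classical.propDecidable _))

/-- `s ⊆ t` as characteristic functions of sets. -/
def lsubset (s t : List Bool) : Prop :=
  ∀ i, s.getD i false = true → t.getD i false = true

/-- `fh` is a basic map on `C ⊆ ⋃_m 2^{k_m}`: level preserving,
end-extension preserving, and monotone. -/
def IsBasicOn (k : ℕ → ℕ) (C : Set (List Bool)) (fh : List Bool → List Bool) : Prop :=
  StrictMono k ∧
  (∀ s ∈ C, ∃ m, s.length = k m) ∧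
  (∀ s ∈ C, ∀ m, s.length = k m → (fh s).length = m) ∧
  (∀ s ∈ C, ∀ t ∈ C, s <+: t → fh s <+: fh t) ∧
  (∀ s ∈ C, ∀ t ∈ C, lsubset s t → lsubset (fh s) (fh t))

/-- The set `{X↾k_m : X ∈ 𝒞, m < ω}` of level-restrictions of members of `𝒞`. -/
def levelsOf (k : ℕ → ℕ) (𝒞 : Set (Set ℕ)) : Set (List Bool) :=
  {s | ∃ X ∈ 𝒞, ∃ m, s = restr X (k m)}

/-- `fh` generates `f` on `𝒞`: `f(X) = ⋃_m fh(X↾k_m)` for each `X ∈ 𝒞`. -/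
def GeneratesOn (k : ℕ → ℕ) (fh : List Bool → List Bool)
    (f : Set ℕ → Set ℕ) (𝒞 : Set (Set ℕ)) : Prop :=
  ∀ X ∈ 𝒞, f X = {i | ∃ m, (fh (restr X (k m))).getD i false = true}

/-!
Extend `fh` to every `s` of length `k m` by taking the union of all `fh t`, `t` a level of `𝒞`
contained in `s`, truncated to length `m`. The extension is end-extension preserving because,
by the end-extension property of `fh`, a witness `t` may be cut down to a level below that of `s`.
Monotonicity of `fh` gives `f̃ X ⊆ f Y` whenever `X ⊆ Y ∈ 𝒞`, while `f Y ⊆ f̃ X` whenever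
`𝒞 ∋ Y ⊆ X` is immediate. Hence `f̃ = f` on `𝒞`, and `f̃ ↾ U`, squeezed between values of `f` on
the cofinal family `𝒞`, is cofinal because `f` is.
-/

theorem List.getD_map_range_eq_true (f : ℕ → Bool) (n i : ℕ) :
    ((List.range n).map f).getD i false = true ↔ i < n ∧ f i = true := by
  by_cases h : i < n <;> simp [h]

theorem List.lt_length_of_getD_eq_true {l : List Bool} {i : ℕ} (h : l.getD i false = true) :
    i < l.length := by
  by_contra! h'
  simp [List.getElem?_eq_none h'] at h

theorem List.IsPrefix.getD_eq {s t : List Bool} (h : s <+: t) {i : ℕ} (hi : i < s.length) :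
    t.getD i false = s.getD i false := by
  simp [List.getElem?_eq_getElem hi, List.getElem?_eq_getElem (hi.trans_le h.length_le),
    h.getElem hi]

theorem length_restr (X : Set ℕ) (n : ℕ) : (restr X n).length = n := by
  simp [restr]

theorem restr_getD_eq_true {X : Set ℕ} {n i : ℕ} :
    (restr X n).getD i false = true ↔ i < n ∧ i ∈ X := by
  rw [restr, List.getD_map_range_eq_true]
  simp

theorem restr_prefix_restr (X : Set ℕ) {a b : ℕ} (h : a ≤ b) : restr X a <+: restr X b := by
  rw [List.prefix_iff_eq_take, length_restr, restr, restr, ← List.map_take, List.take_range,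
    min_eq_left h]

theorem lsubset_trans {s t u : List Bool} (hst : lsubset s t) (htu : lsubset t u) :
    lsubset s u :=
  fun i hi => htu i (hst i hi)

theorem lsubset_of_prefix {s t : List Bool} (h : s <+: t) : lsubset s t := fun i hi => by
  rwa [h.getD_eq (List.lt_length_of_getD_eq_true hi)]

theorem lsubset_restr_restr {X Y : Set ℕ} {a b : ℕ} (hXY : X ⊆ Y) (hab : a ≤ b) :
    lsubset (restr X a) (restr Y b) := fun i hi => by
  rw [restr_getD_eq_true] at hi ⊢
  exact ⟨hi.1.trans_le hab, hXY hi.2⟩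

theorem lsubset_restr_of_lsubset {Y : Set ℕ} {a : ℕ} {s : List Bool} (b : ℕ)
    (hs : lsubset (restr Y a) s) (hb : s.length ≤ b) : lsubset (restr Y a) (restr Y b) :=
  fun i hi => restr_getD_eq_true.2
    ⟨(List.lt_length_of_getD_eq_true (hs i hi)).trans_le hb, (restr_getD_eq_true.1 hi).2⟩

theorem lsubset_restr_min {Y : Set ℕ} {a b : ℕ} {s t : List Bool} (hst : s <+: t)
    (hs : s.length = b) (ht : lsubset (restr Y a) t) : lsubset (restr Y (min a b)) s :=
  fun i hi => by
    obtain ⟨hia, hiY⟩ := restr_getD_eq_true.1 hi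
    have hib : i < s.length := hs ▸ hia.trans_le (min_le_right a b)
    rw [← hst.getD_eq hib]
    exact ht i (restr_getD_eq_true.2 ⟨hia.trans_le (min_le_left a b), hiY⟩)

section Extension

variable (k : ℕ → ℕ) (𝒞 : Set (Set ℕ)) (fh : List Bool → List Bool)

def ExtensionBit (s : List Bool) (i : ℕ) : Prop :=
  ∃ t ∈ levelsOf k 𝒞, lsubset t s ∧ (fh t).getD i false = true

open Classical in
/-- Off the lengths `k m`, the value `[]` is a placeholder. -/
noncomputable def extension (s : List Bool) : List Bool :=
  if h : ∃ m, s.length = k m then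
    (List.range h.choose).map fun i =>
      @decide (ExtensionBit k 𝒞 fh s i) (Classical.propDecidable _)
  else []

def extendedMap (X : Set ℕ) : Set ℕ :=
  {i | ∃ m, (extension k 𝒞 fh (restr X (k m))).getD i false = true}

variable {k 𝒞 fh}

theorem extension_eq (hk : StrictMono k) {s : List Bool} {m : ℕ} (hm : s.length = k m) :
    extension k 𝒞 fh s = (List.range m).map fun i =>
      @decide (ExtensionBit k 𝒞 fh s i) (Classical.propDecidable _) := by
  have h : ∃ m, s.length = k m := ⟨m, hm⟩
  rw [extension, dif_pos h, hk.injective (h.choose_spec.symm.trans hm)]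

theorem extension_getD_eq_true (hk : StrictMono k) {s : List Bool} {m : ℕ}
    (hm : s.length = k m) {i : ℕ} :
    (extension k 𝒞 fh s).getD i false = true ↔ i < m ∧ ExtensionBit k 𝒞 fh s i := by
  rw [extension_eq hk hm, List.getD_map_range_eq_true]
  simp only [decide_eq_true_eq]

theorem ExtensionBit.mono {s t : List Bool} {i : ℕ} (hst : lsubset s t)
    (h : ExtensionBit k 𝒞 fh s i) : ExtensionBit k 𝒞 fh t i := by
  obtain ⟨u, hu, hus, hi⟩ := h
  exact ⟨u, hu, lsubset_trans hus hst, hi⟩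

theorem IsBasicOn.length_apply_restr (hb : IsBasicOn k (levelsOf k 𝒞) fh) {Y : Set ℕ}
    (hY : Y ∈ 𝒞) (j : ℕ) :
    (fh (restr Y (k j))).length = j :=
  hb.2.2.1 _ ⟨Y, hY, j, rfl⟩ j (length_restr Y (k j))

theorem IsBasicOn.getD_restr_min (hb : IsBasicOn k (levelsOf k 𝒞) fh) {Y : Set ℕ}
    (hY : Y ∈ 𝒞) (j m : ℕ) {i : ℕ} (hi : i < m) :
    (fh (restr Y (k (min j m)))).getD i false = (fh (restr Y (k j))).getD i false := by
  rcases le_total j m with h | h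
  · rw [min_eq_left h]
  · rw [min_eq_right h]
    exact ((hb.2.2.2.1 _ ⟨Y, hY, m, rfl⟩ _ ⟨Y, hY, j, rfl⟩
      (restr_prefix_restr Y (hb.1.monotone h))).getD_eq (by rwa [hb.length_apply_restr hY])).symm

theorem IsBasicOn.extensionBit_of_prefix (hb : IsBasicOn k (levelsOf k 𝒞) fh)
    {s t : List Bool} (hst : s <+: t) {m i : ℕ} (hs : s.length = k m) (hi : i < m)
    (h : ExtensionBit k 𝒞 fh t i) :
    ExtensionBit k 𝒞 fh s i := by
  obtain ⟨_, ⟨Y, hY, j, rfl⟩, hYt, hYi⟩ := h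
  exact ⟨restr Y (k (min j m)), ⟨Y, hY, min j m, rfl⟩,
    by simpa only [hb.1.monotone.map_min] using lsubset_restr_min hst hs hYt,
    (hb.getD_restr_min hY j m hi).trans hYi⟩

theorem IsBasicOn.extension (hb : IsBasicOn k (levelsOf k 𝒞) fh) :
    IsBasicOn k {s | ∃ m, s.length = k m} (extension k 𝒞 fh) := by
  refine ⟨hb.1, fun s hs => hs, fun s _ m hm => by simp [extension_eq hb.1 hm], ?_, ?_⟩
  · rintro s ⟨m, hm⟩ t ⟨m', hm'⟩ hst
    have hmm' : m ≤ m' := hb.1.le_iff_le.1 (hm ▸ hm' ▸ hst.length_le)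
    rw [extension_eq hb.1 hm, extension_eq hb.1 hm', List.prefix_iff_getElem]
    refine ⟨by simpa using hmm', fun i hi => ?_⟩
    simp only [List.getElem_map, List.getElem_range, decide_eq_decide]
    simp only [List.length_map, List.length_range] at hi
    exact ⟨fun h => h.mono (lsubset_of_prefix hst), hb.extensionBit_of_prefix hst hm hi⟩
  · rintro s ⟨m, hm⟩ t ⟨m', hm'⟩ hst i hi
    obtain ⟨-, _, ⟨Y, hY, j, rfl⟩, hYs, hYi⟩ := (extension_getD_eq_true hb.1 hm).1 hi
    rw [extension_getD_eq_true hb.1 hm']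
    have hYi' : (fh (restr Y (k m'))).getD i false = true :=
      hb.2.2.2.2 _ ⟨Y, hY, j, rfl⟩ _ ⟨Y, hY, m', rfl⟩
        (lsubset_restr_of_lsubset _ (lsubset_trans hYs hst) hm'.le) i hYi
    exact ⟨hb.length_apply_restr hY m' ▸ List.lt_length_of_getD_eq_true hYi',
      ExtensionBit.mono hst ⟨_, ⟨Y, hY, j, rfl⟩, hYs, hYi⟩⟩

theorem mem_extendedMap (hk : StrictMono k) {X : Set ℕ} {i : ℕ} :
    i ∈ extendedMap k 𝒞 fh X ↔ ∃ m, i < m ∧ ExtensionBit k 𝒞 fh (restr X (k m)) i :=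
  exists_congr fun m => extension_getD_eq_true hk (length_restr X (k m))

theorem extendedMap_mono (hk : StrictMono k) : Monotone (extendedMap k 𝒞 fh) := by
  intro X Y hXY i hi
  obtain ⟨m, him, hbit⟩ := (mem_extendedMap hk).1 hi
  exact (mem_extendedMap hk).2 ⟨m, him, hbit.mono (lsubset_restr_restr hXY le_rfl)⟩

variable {f : Set ℕ → Set ℕ}

theorem IsBasicOn.extendedMap_subset (hb : IsBasicOn k (levelsOf k 𝒞) fh)
    (hgen : GeneratesOn k fh f 𝒞) {X Y : Set ℕ} (hXY : X ⊆ Y) (hY : Y ∈ 𝒞) :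
    extendedMap k 𝒞 fh X ⊆ f Y := by
  intro i hi
  obtain ⟨m, -, _, ⟨Z, hZ, j, rfl⟩, hZX, hZi⟩ := (mem_extendedMap hb.1).1 hi
  have hZY : lsubset (restr Z (k j)) (restr Y (k j)) := fun i' hi' => by
    have hi'X := restr_getD_eq_true.1 (hZX i' hi')
    exact restr_getD_eq_true.2 ⟨(restr_getD_eq_true.1 hi').1, hXY hi'X.2⟩
  rw [hgen Y hY]
  exact ⟨j, hb.2.2.2.2 _ ⟨Z, hZ, j, rfl⟩ _ ⟨Y, hY, j, rfl⟩ hZY i hZi⟩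

theorem IsBasicOn.subset_extendedMap (hb : IsBasicOn k (levelsOf k 𝒞) fh)
    (hgen : GeneratesOn k fh f 𝒞) {X Y : Set ℕ} (hYX : Y ⊆ X) (hY : Y ∈ 𝒞) :
    f Y ⊆ extendedMap k 𝒞 fh X := by
  intro i hi
  rw [hgen Y hY] at hi
  obtain ⟨m, hi⟩ := hi
  exact (mem_extendedMap hb.1).2
    ⟨m, hb.length_apply_restr hY m ▸ List.lt_length_of_getD_eq_true hi, _, ⟨Y, hY, m, rfl⟩,
      lsubset_restr_restr hYX le_rfl, hi⟩

end Extension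

theorem isCofinalMap_of_squeeze {U V : Ultrafilter ℕ} {f g : Set ℕ → Set ℕ}
    {𝒞 : Set (Set ℕ)} (h𝒞 : IsCofinalSub U 𝒞) (hf : IsCofinalSub V (f '' 𝒞))
    (hle : ∀ X, ∀ Y ∈ 𝒞, X ⊆ Y → g X ⊆ f Y) (hge : ∀ X, ∀ Y ∈ 𝒞, Y ⊆ X → f Y ⊆ g X) :
    IsCofinalMap U V g := by
  intro D hD
  constructor
  · rintro _ ⟨X, hX, rfl⟩
    obtain ⟨Y, hY, hYX⟩ := h𝒞.2 X (hD.1 X hX)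
    exact V.mem_of_superset (hf.1 _ ⟨Y, hY, rfl⟩) (hge X Y hY hYX)
  · intro Z hZ
    obtain ⟨_, ⟨Y, hY, rfl⟩, hYZ⟩ := hf.2 Z hZ
    obtain ⟨X, hX, hXY⟩ := hD.2 Y (h𝒞.1 Y hY)
    exact ⟨g X, ⟨X, hX, rfl⟩, (hle X Y hY hXY).trans hYZ⟩

theorem extension_lemma_general (U V : Ultrafilter ℕ)
    (f : Set ℕ → Set ℕ) (hcof : IsCofinalMap U V f)
    (𝒞 : Set (Set ℕ)) (h𝒞 : IsCofinalSub U 𝒞)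
    (k : ℕ → ℕ) (fh : List Bool → List Bool)
    (hbasic : IsBasicOn k (levelsOf k 𝒞) fh)
    (hgen : GeneratesOn k fh f 𝒞) :
    ∃ ftil : Set ℕ → Set ℕ,
      (∀ X Y : Set ℕ, Y ⊆ X → ftil Y ⊆ ftil X) ∧
      (∃ (k' : ℕ → ℕ) (gh : List Bool → List Bool),
        IsBasicOn k' {s | ∃ m, s.length = k' m} gh ∧
        GeneratesOn k' gh ftil Set.univ) ∧
      (∀ X ∈ 𝒞, ftil X = f X) ∧
      IsCofinalMap U V ftil := by
  have hle : ∀ X, ∀ Y ∈ 𝒞, X ⊆ Y → extendedMap k 𝒞 fh X ⊆ f Y :=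
    fun _ _ hY h => hbasic.extendedMap_subset hgen h hY
  have hge : ∀ X, ∀ Y ∈ 𝒞, Y ⊆ X → f Y ⊆ extendedMap k 𝒞 fh X :=
    fun _ _ hY h => hbasic.subset_extendedMap hgen h hY
  exact ⟨extendedMap k 𝒞 fh, fun _ _ h => extendedMap_mono hbasic.1 h,
    ⟨k, extension k 𝒞 fh, hbasic.extension, fun _ _ => rfl⟩,
    fun X hX => (hle X X hX subset_rfl).antisymm (hge X X hX subset_rfl),
    isCofinalMap_of_squeeze h𝒞 (hcof 𝒞 h𝒞) hle hge⟩

/-- Extension Lemma: if `U`, `V` are nonprincipal ultrafilters, `f : U → V` is a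
monotone cofinal map, and `f` is generated by a basic map on a cofinal `𝒞 ⊆ U`,
then there is a monotone map `f̃ : 2^ω → 2^ω` which is generated by a basic map
(on all of `⋃_m 2^{k_m}`), agrees with `f` on `𝒞`, and restricts to a cofinal map
from `U` to `V`. -/
theorem extension_lemma (U V : Ultrafilter ℕ)
    (hU : ∀ a : ℕ, U ≠ pure a) (hV : ∀ a : ℕ, V ≠ pure a)
    (f : Set ℕ → Set ℕ) (hmono : MonotoneOnU U f) (hcof : IsCofinalMap U V f)
    (𝒞 : Set (Set ℕ)) (h𝒞 : IsCofinalSub U 𝒞)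
    (k : ℕ → ℕ) (fh : List Bool → List Bool)
    (hbasic : IsBasicOn k (levelsOf k 𝒞) fh)
    (hgen : GeneratesOn k fh f 𝒞) :
    ∃ ftil : Set ℕ → Set ℕ,
      (∀ X Y : Set ℕ, Y ⊆ X → ftil Y ⊆ ftil X) ∧
      (∃ (k' : ℕ → ℕ) (gh : List Bool → List Bool),
        IsBasicOn k' {s | ∃ m, s.length = k' m} gh ∧
        GeneratesOn k' gh ftil Set.univ) ∧
      (∀ X ∈ 𝒞, ftil X = f X) ∧
      IsCofinalMap U V ftil :=
  extension_lemma_general U V f hcof 𝒞 h𝒞 k fh hbasic hgen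
end

section
/- Let f̃ : 2^ω → 2^ω be continuous, C ⊆ 2^ω with closure C̄ compact in 2^ω, and D̄ = f̃''C̄. Then for each Y ∈ D̄ and each m < ω, there is an m̃ ≥ m such that: for every Z ∈ C̄ with f̃(Z)↾m̃ = Y↾m̃, there is an X ∈ C̄ with f̃(X) = Y and X↾k_m = Z↾k_m, where (k_m) is any fixed strictly increasing sequence. -/
/-!
The set `S` of those `Z ∈ C̄` for which a suitable `X` exists depends only on `Z↾k_m`, so it is
open. Every `X ∈ C̄` in the fibre of `Y` lies in `S` (take `X` itself), hence `Y` lies outside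
the compact, hence closed, image `f̃''(C̄ \ S)`, and some cylinder around `Y` misses that image.
-/

open PiNat

/-- The restriction `X↾n` of `X ∈ 2^ω` to its first `n` coordinates. -/
def restrB (X : ℕ → Bool) (n : ℕ) : List Bool := (List.range n).map X

lemma restrB_eq_iff_mem_cylinder {X Y : ℕ → Bool} {n : ℕ} :
    restrB X n = restrB Y n ↔ X ∈ cylinder Y n := by
  simp [restrB, List.map_inj_left, mem_cylinder_iff]

lemma isLocallyConstant_restrB (n : ℕ) : IsLocallyConstant fun X : ℕ → Bool => restrB X n :=
  (IsLocallyConstant.iff_exists_open _).2 fun X =>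
    ⟨cylinder X n, isOpen_cylinder _ X n, self_mem_cylinder X n,
      fun _ hX' => restrB_eq_iff_mem_cylinder.2 hX'⟩

lemma exists_cylinder_preimage_subset {α : Type*} [TopologicalSpace α] {E : ℕ → Type*}
    [∀ n, TopologicalSpace (E n)] [∀ n, DiscreteTopology (E n)] {f : α → ∀ n, E n}
    (hf : Continuous f) {K U : Set α} (hK : IsCompact K) (hU : IsOpen U) {y : ∀ n, E n}
    (hy : ∀ x ∈ K, f x = y → x ∈ U) : ∃ n, ∀ x ∈ K, f x ∈ cylinder y n → x ∈ U := by
  have hclosed : IsClosed (f '' (K \ U)) := ((hK.diff hU).image hf).isClosed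
  have hy_notMem : y ∉ f '' (K \ U) := by
    rintro ⟨x, ⟨hxK, hxU⟩, rfl⟩
    exact hxU (hy x hxK rfl)
  obtain ⟨n, hn⟩ := exists_disjoint_cylinder hclosed hy_notMem
  refine ⟨n, fun x hxK hxy => ?_⟩
  by_contra hxU
  exact Set.disjoint_left.1 hn ⟨x, ⟨hxK, hxU⟩, rfl⟩ hxy

theorem exists_uniform_level_general
    (ftil : (ℕ → Bool) → (ℕ → Bool)) (hf : Continuous ftil)
    (C : Set (ℕ → Bool)) (hcomp : IsCompact (closure C))
    (k : ℕ → ℕ) (g : List Bool → List Bool) :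
    ∀ Y ∈ ftil '' closure C, ∀ m : ℕ, ∃ mt : ℕ, m ≤ mt ∧
      ∀ Z ∈ closure C, restrB (ftil Z) mt = restrB Y mt →
        ∃ X ∈ closure C, ftil X = Y ∧
          g (restrB X (k m)) = g (restrB Z (k m)) := by
  intro Y _ m
  set S := {Z | ∃ X ∈ closure C, ftil X = Y ∧ g (restrB X (k m)) = g (restrB Z (k m))}
  have hS : IsOpen S := ((isLocallyConstant_restrB (k m)).comp g) {v |
    ∃ X ∈ closure C, ftil X = Y ∧ g (restrB X (k m)) = v}
  obtain ⟨n, hn⟩ := exists_cylinder_preimage_subset hf hcomp hS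
    fun X hX hXY => ⟨X, hX, hXY, rfl⟩
  refine ⟨max m n, le_max_left m n, fun Z hZ hZY => hn Z hZ ?_⟩
  exact cylinder_anti Y (le_max_right m n) (restrB_eq_iff_mem_cylinder.1 hZY)

/-- Compactness/uniformization claim: if `f̃ : 2^ω → 2^ω` is continuous and `C̄` is the
(compact) closure of `C ⊆ 2^ω`, then for each `Y ∈ f̃''C̄` and `m`, there is `m̃ ≥ m`
such that whenever `Z ∈ C̄` satisfies `f̃(Z)↾m̃ = Y↾m̃`, there exists `X ∈ C̄` with
`f̃(X) = Y` and `ĝ(X↾k_m) = ĝ(Z↾k_m)`, for any fixed finitary function `ĝ`. -/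
theorem exists_uniform_level
    (ftil : (ℕ → Bool) → (ℕ → Bool)) (hf : Continuous ftil)
    (C : Set (ℕ → Bool)) (hcomp : IsCompact (closure C))
    (k : ℕ → ℕ) (hk : StrictMono k) (g : List Bool → List Bool) :
    ∀ Y ∈ ftil '' closure C, ∀ m : ℕ, ∃ mt : ℕ, m ≤ mt ∧
      ∀ Z ∈ closure C, restrB (ftil Z) mt = restrB Y mt →
        ∃ X ∈ closure C, ftil X = Y ∧
          g (restrB X (k m)) = g (restrB Z (k m)) :=
  exists_uniform_level_general ftil hf C hcomp k g
end

section
/- If B_{{n}} is a front on ω \ (n+1) for each n ∈ ω, then B = ⋃_{n∈ω} {{n} ∪ a : a ∈ B_{{n}}} is a front on ω. Moreover, if each B_{{n}} is a flat-top front, then B is a flat-top front. -/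
/-- `a` is an initial segment of `b` (with respect to increasing enumerations). -/
def FinInitSeg (a b : Finset ℕ) : Prop :=
  a ⊆ b ∧ ∀ x ∈ b, ∀ y ∈ a, x ≤ y → x ∈ a

/-- `a` is an initial segment of the (infinite) set `X`. -/
def FinInitSegSet (a : Finset ℕ) (X : Set ℕ) : Prop :=
  (↑a : Set ℕ) ⊆ X ∧ ∀ x ∈ X, ∀ y ∈ a, x ≤ y → x ∈ a

/-- `B` is a front on `I`. -/
def IsFront (I : Set ℕ) (B : Set (Finset ℕ)) : Prop :=
  (∀ b ∈ B, (↑b : Set ℕ) ⊆ I) ∧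
  (∀ a ∈ B, ∀ b ∈ B, FinInitSeg a b → a = b) ∧
  (∀ X : Set ℕ, X ⊆ I → X.Infinite → ∃ b ∈ B, FinInitSegSet b X)

/-- `B` is a flat-top front on `I`: a front with `B ≠ {∅}` such that either
`B = [I]^1`, or `B ⊆ [I]^{≥2}` and for each `b ∈ B`, letting `a = b \ {max b}`,
the set `{c \ a : c ∈ B, c ⊐ a}` equals `[I \ (max a + 1)]^1`. -/
def IsFlatTop (I : Set ℕ) (B : Set (Finset ℕ)) : Prop :=
  IsFront I B ∧ B ≠ {(∅ : Finset ℕ)} ∧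
  (B = {c : Finset ℕ | c.card = 1 ∧ (↑c : Set ℕ) ⊆ I} ∨
    ((∀ b ∈ B, 2 ≤ b.card) ∧
     ∀ b ∈ B, ∀ m : ℕ, b.max = (m : WithBot ℕ) →
       ((∀ c ∈ B, FinInitSeg (b.erase m) c → b.erase m ≠ c →
           ∃ x ∈ I, (∀ y ∈ b.erase m, y < x) ∧ c = insert x (b.erase m)) ∧
        (∀ x ∈ I, (∀ y ∈ b.erase m, y < x) → insert x (b.erase m) ∈ B))))


/-! An infinite `X` has in `frontSum Bn` the initial segment `{min X} ∪ a`, where `a` is the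
initial segment of `X \ {min X}` in `Bn (min X)`; comparing two members of the sum as initial
segments forces equal heads, so the antichain property reduces to that of each `Bn n`.
Since `n < min a`, removing the maximum of `{n} ∪ a` leaves `{n} ∪ (a \ {max a})`, and the
one-point extensions of this set in the sum are exactly `{n}` followed by the one-point
extensions of `a \ {max a}` in `Bn n`. -/

open Set

def frontSum (Bn : ℕ → Set (Finset ℕ)) : Set (Finset ℕ) :=
  {c | ∃ n : ℕ, ∃ a ∈ Bn n, c = insert n a}

/-- The condition `IsFlatTop` puts on `b \ {max b}`; for `B = [I]^1` it holds at `∅`. -/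
def HasFlatTopAt (I : Set ℕ) (B : Set (Finset ℕ)) (a : Finset ℕ) : Prop :=
  (∀ c ∈ B, FinInitSeg a c → a ≠ c → ∃ x ∈ I, (∀ y ∈ a, y < x) ∧ c = insert x a) ∧
  (∀ x ∈ I, (∀ y ∈ a, y < x) → insert x a ∈ B)

theorem FinInitSeg.of_insert_insert {n n' : ℕ} {a a' : Finset ℕ}
    (ha : ∀ x ∈ a, n < x) (ha' : ∀ x ∈ a', n' < x)
    (h : FinInitSeg (insert n a) (insert n' a')) : n = n' ∧ FinInitSeg a a' := by
  obtain ⟨hsub, hcl⟩ := h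
  have hn'n : n' ≤ n := by
    rcases Finset.mem_insert.1 (hsub (Finset.mem_insert_self n a)) with h | h
    · exact h.ge
    · exact (ha' n h).le
  obtain rfl : n = n' := by
    rcases Finset.mem_insert.1 (hcl n' (Finset.mem_insert_self n' a') n
      (Finset.mem_insert_self n a) hn'n) with h | h
    · exact h.symm
    · exact absurd (ha n' h) hn'n.not_gt
  refine ⟨rfl, fun x hx => ?_, fun x hx y hy hxy => ?_⟩
  · rcases Finset.mem_insert.1 (hsub (Finset.mem_insert_of_mem hx)) with h | h
    · exact absurd h (ha x hx).ne'
    · exact h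
  · rcases Finset.mem_insert.1 (hcl x (Finset.mem_insert_of_mem hx) y
      (Finset.mem_insert_of_mem hy) hxy) with h | h
    · exact absurd h (ha' x hx).ne'
    · exact h

theorem FinInitSegSet.insert_of_isLeast {n : ℕ} {a : Finset ℕ} {X : Set ℕ}
    (hn : IsLeast X n) (h : FinInitSegSet a (X ∩ Ioi n)) : FinInitSegSet (insert n a) X := by
  refine ⟨?_, fun x hx y hy hxy => ?_⟩
  · rw [Finset.coe_insert]
    exact insert_subset hn.1 (h.1.trans inter_subset_left)
  · rcases (hn.2 hx).eq_or_lt with rfl | hnx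
    · exact Finset.mem_insert_self n a
    · rcases Finset.mem_insert.1 hy with rfl | hy
      · exact absurd hxy hnx.not_ge
      · exact Finset.mem_insert_of_mem (h.2 x ⟨hx, hnx⟩ y hy hxy)

theorem IsFront.lt_of_mem {n : ℕ} {B : Set (Finset ℕ)} (hB : IsFront (Ioi n) B)
    {a : Finset ℕ} (ha : a ∈ B) {x : ℕ} (hx : x ∈ a) : n < x :=
  hB.1 a ha hx

theorem IsFront.empty_notMem {I : Set ℕ} {B : Set (Finset ℕ)} (hB : IsFront I B)
    (hne : B ≠ {∅}) : ∅ ∉ B := by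
  intro h
  refine hne (eq_singleton_iff_unique_mem.2 ⟨h, fun b hb => (hB.2.1 ∅ h b hb ?_).symm⟩)
  exact ⟨Finset.empty_subset b, fun x _ y hy => absurd hy (Finset.notMem_empty y)⟩

theorem hasFlatTopAt_empty_singletons (I : Set ℕ) :
    HasFlatTopAt I {c : Finset ℕ | c.card = 1 ∧ (↑c : Set ℕ) ⊆ I} ∅ := by
  refine ⟨fun c hc _ _ => ?_, fun x hx _ => ⟨Finset.card_singleton x, by simpa using hx⟩⟩
  obtain ⟨x, rfl⟩ := Finset.card_eq_one.1 hc.1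
  exact ⟨x, by simpa using hc.2, by simp, rfl⟩

theorem IsFlatTop.hasFlatTopAt_erase_max {I : Set ℕ} {B : Set (Finset ℕ)}
    (hB : IsFlatTop I B) {b : Finset ℕ} (hb : b ∈ B) {m : ℕ} (hm : b.max = m) :
    HasFlatTopAt I B (b.erase m) := by
  rcases hB.2.2 with hsingle | ⟨-, htop⟩
  · rw [hsingle] at hb ⊢
    obtain ⟨k, rfl⟩ := Finset.card_eq_one.1 hb.1
    obtain rfl : k = m := WithBot.coe_inj.1 (by rwa [Finset.max_singleton] at hm)
    rw [Finset.erase_singleton]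
    exact hasFlatTopAt_empty_singletons I
  · exact htop b hb m hm

theorem Finset.max_insert_of_forall_lt {n : ℕ} {a : Finset ℕ} (hne : a.Nonempty)
    (h : ∀ x ∈ a, n < x) : (insert n a).max = a.max := by
  obtain ⟨m, hm⟩ := Finset.max_of_nonempty hne
  rw [Finset.max_insert, hm, max_eq_right]
  exact WithBot.coe_le_coe.2 (h m (Finset.mem_of_max hm)).le

section frontSum

variable {Bn : ℕ → Set (Finset ℕ)}

theorem isFront_frontSum (hBn : ∀ n, IsFront (Ioi n) (Bn n)) :
    IsFront univ (frontSum Bn) := by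
  refine ⟨fun _ _ => subset_univ _, ?_, fun X _ hX => ?_⟩
  · rintro _ ⟨n, a, ha, rfl⟩ _ ⟨n', a', ha', rfl⟩ hseg
    obtain ⟨rfl, htail⟩ := hseg.of_insert_insert (fun _ => (hBn n).lt_of_mem ha)
      (fun _ => (hBn n').lt_of_mem ha')
    rw [(hBn n).2.1 a ha a' ha' htail]
  · have hn : IsLeast X (sInf X) := ⟨Nat.sInf_mem hX.nonempty, fun x hx => Nat.sInf_le hx⟩
    have htail : (X ∩ Ioi (sInf X)).Infinite := by
      refine (hX.sdiff (finite_singleton (sInf X))).mono ?_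
      rintro x ⟨hx, hxn⟩
      exact ⟨hx, (hn.2 hx).lt_of_ne (Ne.symm hxn)⟩
    obtain ⟨a, ha, hseg⟩ := (hBn (sInf X)).2.2 _ inter_subset_right htail
    exact ⟨_, ⟨sInf X, a, ha, rfl⟩, hseg.insert_of_isLeast hn⟩

theorem hasFlatTopAt_frontSum_insert (hBn : ∀ n, IsFront (Ioi n) (Bn n)) {n : ℕ}
    {a : Finset ℕ} (ha : ∀ x ∈ a, n < x) (htop : HasFlatTopAt (Ioi n) (Bn n) a) :
    HasFlatTopAt univ (frontSum Bn) (insert n a) := by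
  refine ⟨?_, fun x _ hx => ?_⟩
  · rintro _ ⟨n', a', ha', rfl⟩ hseg hne
    obtain ⟨rfl, htail⟩ := hseg.of_insert_insert ha (fun _ => (hBn n').lt_of_mem ha')
    obtain ⟨x, hnx, hx, rfl⟩ := htop.1 a' ha' htail (fun h => hne (h ▸ rfl))
    refine ⟨x, mem_univ x, ?_, Finset.insert_comm n x a⟩
    simpa [Finset.forall_mem_insert] using ⟨hnx, hx⟩
  · rw [Finset.forall_mem_insert] at hx
    exact ⟨n, insert x a, htop.2 x hx.1 hx.2, Finset.insert_comm x n a⟩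

theorem isFlatTop_frontSum (hBn : ∀ n, IsFlatTop (Ioi n) (Bn n)) :
    IsFlatTop univ (frontSum Bn) := by
  have hfront n := (hBn n).1
  have hne {n a} (ha : a ∈ Bn n) : a.Nonempty :=
    Finset.nonempty_iff_ne_empty.2 fun h => (hfront n).empty_notMem (hBn n).2.1 (h ▸ ha)
  refine ⟨isFront_frontSum hfront, fun h => ?_, Or.inr ⟨?_, ?_⟩⟩
  · obtain ⟨n, a, -, h⟩ : (∅ : Finset ℕ) ∈ frontSum Bn := h ▸ rfl
    exact Finset.insert_ne_empty n a h.symm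
  · rintro _ ⟨n, a, ha, rfl⟩
    rw [Finset.card_insert_of_notMem fun h => lt_irrefl n ((hfront n).lt_of_mem ha h)]
    exact Nat.succ_le_succ (hne ha).card_pos
  · rintro _ ⟨n, a, ha, rfl⟩ m hm
    have hlt : ∀ x ∈ a, n < x := fun _ => (hfront n).lt_of_mem ha
    rw [Finset.max_insert_of_forall_lt (hne ha) hlt] at hm
    have hnm : n ≠ m := (hlt m (Finset.mem_of_max hm)).ne
    rw [Finset.erase_insert_of_ne hnm]
    exact hasFlatTopAt_frontSum_insert hfront (fun x hx => hlt x (Finset.mem_of_mem_erase hx))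
      ((hBn n).hasFlatTopAt_erase_max ha hm)

end frontSum

/-- If each `B_{{n}}` is a front on `ω \ (n+1)`, then
`B = ⋃_n {{n} ∪ a : a ∈ B_{{n}}}` is a front on `ω`; moreover if each `B_{{n}}`
is a flat-top front, then `B` is a flat-top front. -/
theorem front_sum_is_front (Bn : ℕ → Set (Finset ℕ))
    (hBn : ∀ n, IsFront (Set.Ioi n) (Bn n)) :
    IsFront Set.univ {c : Finset ℕ | ∃ n : ℕ, ∃ a ∈ Bn n, c = insert n a} ∧
    ((∀ n, IsFlatTop (Set.Ioi n) (Bn n)) →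
      IsFlatTop Set.univ {c : Finset ℕ | ∃ n : ℕ, ∃ a ∈ Bn n, c = insert n a}) :=
  ⟨isFront_frontSum hBn, isFlatTop_frontSum⟩
end

section
/- If T is a U⃗-tree on a flat-top front B, then the set [T] of maximal branches through T is contained in B, and the collection {[T] : T a U⃗-tree} is a filter base (closed under finite intersection up to refinement: the intersection of two U⃗-trees is a U⃗-tree) generating an ultrafilter on base set B. -/
/-- `B̂`: the tree of all initial segments of members of `B`. -/
def Bhat (B : Set (Finset ℕ)) : Set (Finset ℕ) :=
  {a | ∃ b ∈ B, FinInitSeg a b}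

/-- A `U⃗`-tree: a subtree `T ⊆ B̂` containing `∅`, closed under initial segments,
such that for each `c ∈ T ∩ B̂⁻` the set of immediate extensions of `c` in `T`
belongs to `Uc c`. -/
def IsUTree (B : Set (Finset ℕ)) (Uc : Finset ℕ → Ultrafilter ℕ)
    (T : Set (Finset ℕ)) : Prop :=
  T ⊆ Bhat B ∧ ∅ ∈ T ∧
  (∀ b ∈ T, ∀ a : Finset ℕ, FinInitSeg a b → a ∈ T) ∧
  (∀ c ∈ T, c ∈ Bhat B \ B → {n : ℕ | insert n c ∈ T} ∈ Uc c)

/-- `[T]`: the set of maximal branches through `T`. -/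
def maxBr (T : Set (Finset ℕ)) : Set (Finset ℕ) :=
  {c | c ∈ T ∧ ∀ c' ∈ T, FinInitSeg c c' → c = c'}

/-- `U` is a nonprincipal ultrafilter. -/
def NonPrincipal (U : Ultrafilter ℕ) : Prop := ∀ a : ℕ, U ≠ pure a

/-- `G` is an ultrafilter on the base set `Bse`. -/
def IsUltrafilterOn (Bse : Set (Finset ℕ)) (G : Set (Set (Finset ℕ))) : Prop :=
  (∅ ∉ G) ∧
  (∀ A ∈ G, A ⊆ Bse) ∧
  (∀ A ∈ G, ∀ A' : Set (Finset ℕ), A ⊆ A' → A' ⊆ Bse → A' ∈ G) ∧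
  (∀ A1 ∈ G, ∀ A2 ∈ G, A1 ∩ A2 ∈ G) ∧
  (∀ A : Set (Finset ℕ), A ⊆ Bse → (A ∈ G ∨ Bse \ A ∈ G))


/-!
A front `B` on `ℕ` makes proper extension inside `B̂` well founded: an infinite chain would have
an infinite union, some member of `B` would be an initial segment of it, and no element of `B̂`
properly extends a member of `B`. Every `c ∈ B̂ \ B` has `insert n c ∈ B̂` for all `n > max c`;
since each `Uc c` is an ultrafilter containing the cofinite sets, well-founded induction shows
that for every `A ⊆ B` one of `A`, `B \ A` contains the maximal branches of a `U⃗`-tree above `c`.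
Nonprincipality also forces maximal branches of `U⃗`-trees into `B`, and a member of `B` is
maximal in every tree inside `B̂` containing it, so `[T₁ ∩ T₂] ⊆ [T₁] ∩ [T₂]`.
-/

section InitialSegments

variable {a b c : Finset ℕ} {X : Set ℕ}

lemma finInitSeg_refl (a : Finset ℕ) : FinInitSeg a a :=
  ⟨subset_rfl, fun _ hx _ _ _ => hx⟩

lemma FinInitSeg.trans (hab : FinInitSeg a b) (hbc : FinInitSeg b c) : FinInitSeg a c :=
  ⟨hab.1.trans hbc.1, fun x hx y hy hxy => hab.2 x (hbc.2 x hx y (hab.1 hy) hxy) y hy hxy⟩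

lemma FinInitSeg.antisymm (hab : FinInitSeg a b) (hba : FinInitSeg b a) : a = b :=
  hab.1.antisymm hba.1

lemma finInitSeg_empty (a : Finset ℕ) : FinInitSeg ∅ a :=
  ⟨a.empty_subset, fun _ _ _ hy => absurd hy (Finset.notMem_empty _)⟩

lemma eq_empty_of_finInitSeg_empty (h : FinInitSeg a ∅) : a = ∅ :=
  Finset.subset_empty.mp h.1

lemma finInitSeg_insert {n : ℕ} (hn : ∀ y ∈ c, y < n) : FinInitSeg c (insert n c) := by
  refine ⟨c.subset_insert n, fun x hx y hy hxy => ?_⟩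
  rcases Finset.mem_insert.mp hx with rfl | hx
  · exact absurd hxy (hn y hy).not_ge
  · exact hx

lemma ne_insert_of_forall_lt {n : ℕ} (hn : ∀ y ∈ c, y < n) : c ≠ insert n c :=
  fun h => (hn n (h ▸ c.mem_insert_self n)).false

lemma FinInitSeg.eq_or_finInitSeg_of_insert {n : ℕ} (hn : ∀ y ∈ c, y < n)
    (h : FinInitSeg a (insert n c)) : a = insert n c ∨ FinInitSeg a c := by
  by_cases hna : n ∈ a
  · refine Or.inl (h.1.antisymm fun x hx => h.2 x hx n hna ?_)
    rcases Finset.mem_insert.mp hx with rfl | hx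
    exacts [le_rfl, (hn x hx).le]
  · have hac : a ⊆ c := fun x hx =>
      (Finset.mem_insert.mp (h.1 hx)).resolve_left (ne_of_mem_of_not_mem hx hna)
    exact Or.inr ⟨hac, fun x hx y hy hxy => h.2 x (Finset.mem_insert_of_mem hx) y hy hxy⟩

lemma FinInitSegSet.finInitSeg_of_subset (ha : FinInitSegSet a X) (hb : FinInitSegSet b X)
    (hab : a ⊆ b) : FinInitSeg a b :=
  ⟨hab, fun x hx => ha.2 x (hb.1 hx)⟩

lemma FinInitSegSet.subset_or_subset (ha : FinInitSegSet a X) (hb : FinInitSegSet b X) :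
    a ⊆ b ∨ b ⊆ a := by
  refine or_iff_not_imp_left.mpr fun hab => ?_
  obtain ⟨y, hya, hyb⟩ := Finset.not_subset.mp hab
  intro z hz
  rcases le_total z y with hzy | hyz
  · exact ha.2 z (hb.1 hz) y hya hzy
  · exact absurd (hb.2 y (ha.1 hya) z hz hyz) hyb

end InitialSegments

section Fronts

variable {I : Set ℕ} {B : Set (Finset ℕ)}

lemma mem_Bhat_of_finInitSeg {a c : Finset ℕ} (hc : c ∈ Bhat B) (hac : FinInitSeg a c) :
    a ∈ Bhat B :=
  let ⟨b, hb, hcb⟩ := hc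
  ⟨b, hb, hac.trans hcb⟩

lemma IsFront.eq_of_finInitSeg (hF : IsFront I B) {b d : Finset ℕ} (hb : b ∈ B)
    (hd : d ∈ Bhat B) (hbd : FinInitSeg b d) : b = d := by
  obtain ⟨b', hb', hdb'⟩ := hd
  obtain rfl := hF.2.1 b hb b' hb' (hbd.trans hdb')
  exact hbd.antisymm hdb'

lemma IsFront.empty_mem_Bhat (hF : IsFront Set.univ B) : ∅ ∈ Bhat B :=
  let ⟨b, hb, _⟩ := hF.2.2 Set.univ subset_rfl Set.infinite_univ
  ⟨b, hb, finInitSeg_empty b⟩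

/-- The front property applied to `c ∪ [n, ∞)` yields a member of `B` comparable with
`insert n c`; it cannot be an initial segment of `c ∉ B`. -/
lemma IsFront.insert_mem_Bhat (hF : IsFront Set.univ B) {c : Finset ℕ} (hc : c ∈ Bhat B)
    (hcB : c ∉ B) {n : ℕ} (hn : ∀ y ∈ c, y < n) : insert n c ∈ Bhat B := by
  set X : Set ℕ := ↑c ∪ Set.Ici n
  have hnc : FinInitSegSet (insert n c) X := by
    refine ⟨fun z hz => ?_, fun x hx y hy hxy => ?_⟩
    · rcases Finset.mem_insert.mp hz with rfl | hz
      exacts [Or.inr (Set.mem_Ici.mpr le_rfl), Or.inl hz]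
    · rcases hx with hx | hx
      · exact Finset.mem_insert_of_mem hx
      · have hyn : y ≤ n := by
          rcases Finset.mem_insert.mp hy with rfl | hy
          exacts [le_rfl, (hn y hy).le]
        exact le_antisymm (hxy.trans hyn) hx ▸ c.mem_insert_self n
  obtain ⟨b, hb, hbX⟩ := hF.2.2 X (Set.subset_univ X) ((Set.Ici_infinite n).mono
    Set.subset_union_right)
  rcases hnc.subset_or_subset hbX with hsub | hsub
  · exact ⟨b, hb, hnc.finInitSeg_of_subset hbX hsub⟩
  · rcases (hbX.finInitSeg_of_subset hnc hsub).eq_or_finInitSeg_of_insert hn with rfl | hbc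
    · exact ⟨_, hb, finInitSeg_refl _⟩
    · exact absurd (hF.eq_of_finInitSeg hb hc hbc ▸ hb) hcB

def StrictExt (B : Set (Finset ℕ)) (d c : Finset ℕ) : Prop :=
  d ∈ Bhat B ∧ FinInitSeg c d ∧ c ≠ d

lemma IsFront.wellFounded_strictExt (hF : IsFront I B) : WellFounded (StrictExt B) := by
  refine wellFounded_iff_isEmpty_descending_chain.mpr ⟨fun ⟨f, hf⟩ => ?_⟩
  have hmono : ∀ {j k}, j ≤ k → FinInitSeg (f j) (f k) := fun hjk => by
    induction hjk with
    | refl => exact finInitSeg_refl _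
    | step _ ih => exact ih.trans (hf _).2.1
  have hcard : ∀ k, k ≤ (f k).card := (strictMono_nat_of_lt_succ fun k =>
    Finset.card_lt_card ((hf k).2.1.1.ssubset_of_ne (hf k).2.2)).id_le
  set X : Set ℕ := ⋃ k, ↑(f k)
  have hX : ∀ k, FinInitSegSet (f k) X := fun k =>
    ⟨Set.subset_iUnion (fun k => (↑(f k) : Set ℕ)) k, fun x hx y hy hxy => by
      obtain ⟨m, hxm⟩ := Set.mem_iUnion.mp hx
      rcases le_total m k with h | h
      exacts [(hmono h).1 hxm, (hmono h).2 x hxm y hy hxy]⟩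
  have hXI : X ⊆ I := Set.iUnion_subset fun k x hx => by
    obtain ⟨b, hb, hkb⟩ := (hf k).1
    exact hF.1 b hb (hkb.1 ((hf k).2.1.1 hx))
  have hXinf : X.Infinite := fun hfin => by
    have := Finset.card_le_card (show f (hfin.toFinset.card + 1) ⊆ hfin.toFinset from
      fun x hx => hfin.mem_toFinset.mpr ((hX _).1 hx))
    have := hcard (hfin.toFinset.card + 1)
    omega
  obtain ⟨b, hb, hbX⟩ := hF.2.2 X hXI hXinf
  set k := b.card + 1
  have hbk : b ⊆ f k := ((hX k).subset_or_subset hbX).resolve_left fun h => by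
    have := Finset.card_le_card h
    have := hcard k
    omega
  have hbk' : b = f (k + 1) := hF.eq_of_finInitSeg hb (hf k).1
    ((hbX.finInitSeg_of_subset (hX k) hbk).trans (hf k).2.1)
  exact (hf k).2.2 ((hf k).2.1.1.antisymm (hbk' ▸ hbk))

end Fronts

lemma NonPrincipal.eventually_forall_lt {U : Ultrafilter ℕ} (hU : NonPrincipal U)
    (c : Finset ℕ) : ∀ᶠ n in U, ∀ y ∈ c, y < n := by
  have hle : (U : Filter ℕ) ≤ Filter.atTop := Nat.cofinite_eq_atTop ▸
    U.le_cofinite_or_eq_pure.resolve_right fun ⟨a, ha⟩ => hU a ha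
  exact hle ((Filter.eventually_all_finset c).mpr fun y _ => Filter.eventually_gt_atTop y)

section UTrees

variable {I : Set ℕ} {B : Set (Finset ℕ)} {Uc : Finset ℕ → Ultrafilter ℕ}
  {T T' : Set (Finset ℕ)}

lemma IsUTree.inter (hT : IsUTree B Uc T) (hT' : IsUTree B Uc T') : IsUTree B Uc (T ∩ T') :=
  ⟨fun _ hc => hT.1 hc.1, ⟨hT.2.1, hT'.2.1⟩,
    fun b hb a hab => ⟨hT.2.2.1 b hb.1 a hab, hT'.2.2.1 b hb.2 a hab⟩,
    fun c hc hcB => Filter.inter_mem (hT.2.2.2 c hc.1 hcB) (hT'.2.2.2 c hc.2 hcB)⟩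

lemma IsUTree.maxBr_subset (hUc : ∀ c, NonPrincipal (Uc c)) (hT : IsUTree B Uc T) :
    maxBr T ⊆ B := by
  intro c hc
  by_contra hcB
  obtain ⟨n, hnT, hn⟩ :=
    (Filter.Eventually.and (hT.2.2.2 c hc.1 ⟨hT.1 hc.1, hcB⟩)
      ((hUc c).eventually_forall_lt c)).exists
  exact ne_insert_of_forall_lt hn (hc.2 _ hnT (finInitSeg_insert hn))

lemma IsUTree.maxBr_nonempty (hF : IsFront I B) (hT : IsUTree B Uc T) :
    (maxBr T).Nonempty := by
  obtain ⟨c, hc, hmin⟩ := hF.wellFounded_strictExt.has_min T ⟨∅, hT.2.1⟩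
  exact ⟨c, hc, fun d hd hcd => by_contra fun hne => hmin d hd ⟨hT.1 hd, hcd, hne⟩⟩

lemma IsFront.mem_maxBr (hF : IsFront I B) (hTB : T ⊆ Bhat B) {c : Finset ℕ} (hc : c ∈ T)
    (hcB : c ∈ B) : c ∈ maxBr T :=
  ⟨hc, fun _ hd hcd => hF.eq_of_finInitSeg hcB (hTB hd) hcd⟩

lemma IsUTree.maxBr_inter_subset (hF : IsFront I B) (hUc : ∀ c, NonPrincipal (Uc c))
    (hT : IsUTree B Uc T) (hT' : IsUTree B Uc T') : maxBr (T ∩ T') ⊆ maxBr T ∩ maxBr T' :=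
  fun _ hc =>
    have hcB := (hT.inter hT').maxBr_subset hUc hc
    ⟨hF.mem_maxBr hT.1 hc.1.1 hcB, hF.mem_maxBr hT'.1 hc.1.2 hcB⟩

end UTrees

/-- An inductive form of "some `U⃗`-tree above `c` has all its maximal branches in `A`":
either `c ∈ B ∩ A`, or the same holds for `insert n c` for a `Uc c`-large set of `n > max c`. -/
inductive Winning (B : Set (Finset ℕ)) (Uc : Finset ℕ → Ultrafilter ℕ) (A : Set (Finset ℕ)) :
    Finset ℕ → Prop
  | leaf {c : Finset ℕ} : c ∈ B → c ∈ A → Winning B Uc A c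
  | node {c : Finset ℕ} (N : Set ℕ) : N ∈ Uc c → (∀ n ∈ N, ∀ y ∈ c, y < n) →
      (∀ n ∈ N, Winning B Uc A (insert n c)) → Winning B Uc A c

def winningTree (B : Set (Finset ℕ)) (Uc : Finset ℕ → Ultrafilter ℕ) (A : Set (Finset ℕ)) :
    Set (Finset ℕ) :=
  {d | ∀ a, FinInitSeg a d → Winning B Uc A a}

section Winning

variable {B A : Set (Finset ℕ)} {Uc : Finset ℕ → Ultrafilter ℕ}

lemma Winning.mem_Bhat {c : Finset ℕ} (h : Winning B Uc A c) : c ∈ Bhat B := by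
  induction h with
  | leaf hcB _ => exact ⟨_, hcB, finInitSeg_refl _⟩
  | node N hN hlt _ ih =>
    obtain ⟨n, hn⟩ := Ultrafilter.nonempty_of_mem hN
    exact mem_Bhat_of_finInitSeg (ih n hn) (finInitSeg_insert (hlt n hn))

lemma insert_mem_winningTree {d : Finset ℕ} {n : ℕ} (hd : d ∈ winningTree B Uc A)
    (hn : ∀ y ∈ d, y < n) (h : Winning B Uc A (insert n d)) :
    insert n d ∈ winningTree B Uc A := fun a ha =>
  (ha.eq_or_finInitSeg_of_insert hn).elim (fun heq => heq ▸ h) (hd a)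

lemma isUTree_winningTree (h : Winning B Uc A ∅) : IsUTree B Uc (winningTree B Uc A) := by
  refine ⟨fun d hd => (hd d (finInitSeg_refl d)).mem_Bhat,
    fun a ha => eq_empty_of_finInitSeg_empty ha ▸ h,
    fun b hb a hab a' ha' => hb a' (ha'.trans hab), fun c hc hcB => ?_⟩
  cases hc c (finInitSeg_refl c) with
  | leaf hcB' _ => exact absurd hcB' hcB.2
  | node N hN hlt hw =>
    exact Filter.mem_of_superset hN fun n hn => insert_mem_winningTree hc (hlt n hn) (hw n hn)

lemma maxBr_winningTree_subset : maxBr (winningTree B Uc A) ⊆ A := by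
  rintro c ⟨hc, hmax⟩
  cases hc c (finInitSeg_refl c) with
  | leaf _ hcA => exact hcA
  | node N hN hlt hw =>
    obtain ⟨n, hn⟩ := Ultrafilter.nonempty_of_mem hN
    exact absurd (hmax _ (insert_mem_winningTree hc (hlt n hn) (hw n hn))
      (finInitSeg_insert (hlt n hn))) (ne_insert_of_forall_lt (hlt n hn))

lemma winning_or_winning_diff (hF : IsFront Set.univ B) (hUc : ∀ c, NonPrincipal (Uc c))
    (A : Set (Finset ℕ)) {c : Finset ℕ} (hc : c ∈ Bhat B) :
    Winning B Uc A c ∨ Winning B Uc (B \ A) c := by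
  induction c using hF.wellFounded_strictExt.induction with
  | _ c ih =>
  by_cases hcB : c ∈ B
  · by_cases hcA : c ∈ A
    exacts [Or.inl (.leaf hcB hcA), Or.inr (.leaf hcB ⟨hcB, hcA⟩)]
  have hsplit : ∀ᶠ n in Uc c, ((∀ y ∈ c, y < n) ∧ Winning B Uc A (insert n c)) ∨
      ((∀ y ∈ c, y < n) ∧ Winning B Uc (B \ A) (insert n c)) :=
    ((hUc c).eventually_forall_lt c).mono fun n hn =>
      have hins := hF.insert_mem_Bhat hc hcB hn
      and_or_left.mp ⟨hn, ih _ ⟨hins, finInitSeg_insert hn, ne_insert_of_forall_lt hn⟩ hins⟩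
  exact (Ultrafilter.eventually_or.mp hsplit).imp
    (fun h => .node _ h (fun _ hn => hn.1) (fun _ hn => hn.2))
    (fun h => .node _ h (fun _ hn => hn.1) (fun _ hn => hn.2))

end Winning

/-- For a flat-top front `B` and nonprincipal ultrafilters `Uc`: the maximal
branches of any `U⃗`-tree lie in `B`, the intersection of two `U⃗`-trees is a
`U⃗`-tree (so `{[T]}` is a filter base), and the sets `[T]` generate an
ultrafilter on base set `B`. -/
theorem utrees_generate_ultrafilter (B : Set (Finset ℕ))
    (hB : IsFlatTop Set.univ B)
    (Uc : Finset ℕ → Ultrafilter ℕ) (hUc : ∀ c, NonPrincipal (Uc c)) :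
    (∀ T : Set (Finset ℕ), IsUTree B Uc T → maxBr T ⊆ B) ∧
    (∀ T1 T2 : Set (Finset ℕ), IsUTree B Uc T1 → IsUTree B Uc T2 →
      IsUTree B Uc (T1 ∩ T2)) ∧
    IsUltrafilterOn B
      {A : Set (Finset ℕ) | A ⊆ B ∧ ∃ T, IsUTree B Uc T ∧ maxBr T ⊆ A} := by
  have hF := hB.1
  refine ⟨fun T hT => hT.maxBr_subset hUc, fun T1 T2 h1 h2 => h1.inter h2,
    ?_, fun A hA => hA.1, ?_, ?_, fun A hAB => ?_⟩
  · rintro ⟨-, T, hT, hTA⟩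
    obtain ⟨c, hc⟩ := hT.maxBr_nonempty hF
    exact hTA hc
  · rintro A ⟨-, T, hT, hTA⟩ A' hAA' hA'B
    exact ⟨hA'B, T, hT, hTA.trans hAA'⟩
  · rintro A1 ⟨hA1B, T1, hT1, hTA1⟩ A2 ⟨-, T2, hT2, hTA2⟩
    exact ⟨Set.inter_subset_left.trans hA1B, T1 ∩ T2, hT1.inter hT2,
      (hT1.maxBr_inter_subset hF hUc hT2).trans (Set.inter_subset_inter hTA1 hTA2)⟩
  · rcases winning_or_winning_diff hF hUc A hF.empty_mem_Bhat with h | h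
    · exact Or.inl ⟨hAB, _, isUTree_winningTree h, maxBr_winningTree_subset⟩
    · exact Or.inr ⟨Set.sdiff_subset, _, isUTree_winningTree h, maxBr_winningTree_subset⟩
end
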